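/- Fix a swap Schelling game (G,b,Λ) with 1/(δ(G)+1) ≤ Λ ≤ 1/2, where δ(G) is the minimum degree of G. Then any strategy profile in which all agents of one color occupy the nodes of an independent set of G is a swap equilibrium. -/

import Mathlib

/-!
An agent of the colour forming the independent set sees only itself of its colour, so its
fraction is `1 / (deg + 1) ≤ 1 / (δ(G) + 1) ≤ Λ`. If it swaps with a non-neighbour, its partner
lands in a neighbourhood entirely of the partner's colour and gets `p 1 = 0`, the least utility.
If it swaps with a neighbour, the fractions `a` and `1 - s` of the two agents become `s` and
`1 - a`; for `a ≤ Λ ≤ 1/2` the shape of `p` forbids `p a < p s` and `p (1 - s) < p (1 - a)` at once.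
-/

open Finset

namespace SwapSchelling

variable {V : Type*} [Fintype V] [DecidableEq V]

open scoped Classical in
/-- The closed neighborhood `N[v]` of a node `v` in `G`, as a `Finset`. -/
noncomputable def closedNbhd (G : SimpleGraph V) (v : V) : Finset V :=
  univ.filter (fun u => u = v ∨ G.Adj v u)

open scoped Classical in
/-- The degree `δ(v)` of a node `v` in `G`. -/
noncomputable def deg (G : SimpleGraph V) (v : V) : ℕ :=
  (univ.filter (fun u => G.Adj v u)).card

/-- The maximum degree `Δ(G)`. -/
noncomputable def maxDeg (G : SimpleGraph V) : ℕ := univ.sup (deg G)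

/-- The minimum degree `δ(G)`. -/
noncomputable def minDeg (G : SimpleGraph V) : ℕ := sInf (Set.range (deg G))

open scoped Classical in
/-- `frac G c v` is the fraction of nodes in the closed neighborhood of `v` that have
the same color as `v` (that is, `f_i(σ)` for the agent `i` occupying node `v`). -/
noncomputable def frac (G : SimpleGraph V) (c : V → Bool) (v : V) : ℝ :=
  (((closedNbhd G v).filter (fun u => c u = c v)).card : ℝ) / ((closedNbhd G v).card : ℝ)

/-- The coloring obtained from `c` after the agents on nodes `v` and `w` swap positions. -/
def swapColor (c : V → Bool) (v w : V) : V → Bool := c ∘ Equiv.swap v w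

/-- A single-peaked utility function `p` with peak at `Λ`: `p 0 = 0`, `p` is strictly
increasing on `[0,Λ]`, `p Λ = 1`, and `p x = p (Λ(1-x)/(1-Λ))` for `x ∈ [Λ,1]`. -/
structure IsSinglePeaked (p : ℝ → ℝ) (Λ : ℝ) : Prop where
  peak_mem : Λ ∈ Set.Ioo (0 : ℝ) 1
  map_zero : p 0 = 0
  strictMonoOn : StrictMonoOn p (Set.Icc 0 Λ)
  map_peak : p Λ = 1
  symm : ∀ x ∈ Set.Icc Λ 1, p x = p (Λ * (1 - x) / (1 - Λ))

/-- A strategy profile: a 2-coloring of the nodes with exactly `b` blue (`true`) nodes. -/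
def IsProfile (c : V → Bool) (b : ℕ) : Prop :=
  (univ.filter (fun v => c v = true)).card = b

/-- The structural data of a swap Schelling game `(G, b, Λ)` with utility function `p`:
`G` is connected, there are `b` blue agents with `1 ≤ b ≤ n/2`, and `p` is a
single-peaked utility function with peak `Λ`. -/
structure IsGame (G : SimpleGraph V) (b : ℕ) (Λ : ℝ) (p : ℝ → ℝ) : Prop where
  connected : G.Connected
  one_le_b : 1 ≤ b
  b_le_half : 2 * b ≤ Fintype.card V
  singlePeaked : IsSinglePeaked p Λ

/-- The swap of the two (differently colored) agents occupying nodes `v` and `w`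
is profitable: both agents strictly increase their utility. -/
def ProfitableSwap (G : SimpleGraph V) (p : ℝ → ℝ) (c : V → Bool) (v w : V) : Prop :=
  c v ≠ c w ∧
  p (frac G (swapColor c v w) w) > p (frac G c v) ∧
  p (frac G (swapColor c v w) v) > p (frac G c w)

/-- A swap equilibrium: no profitable swap exists. -/
def IsSwapEquilibrium (G : SimpleGraph V) (p : ℝ → ℝ) (c : V → Bool) : Prop :=
  ∀ v w, ¬ ProfitableSwap G p c v w

open scoped Classical in
/-- The degree of integration: the number of non-segregated agents. -/
noncomputable def DoI (G : SimpleGraph V) (c : V → Bool) : ℕ :=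
  (univ.filter (fun v => frac G c v ≠ 1)).card

open scoped Classical in
/-- The number of monochromatic edges of `G` under the coloring `c`. -/
noncomputable def Phi (G : SimpleGraph V) (c : V → Bool) : ℕ :=
  (G.edgeFinset.filter (fun e => ∀ u ∈ e, ∀ w ∈ e, c u = c w)).card

open scoped Classical in
/-- The number of edges of `G`. -/
noncomputable def numEdges (G : SimpleGraph V) : ℕ :=
  (univ.filter (fun e : Sym2 V => e ∈ G.edgeSet)).card

/-- A finset of nodes is an independent set of `G`. -/
def IsIndepSet (G : SimpleGraph V) (s : Finset V) : Prop :=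
  ∀ u ∈ s, ∀ w ∈ s, ¬ G.Adj u w

open scoped Classical in
/-- The independence number `α(G)`. -/
noncomputable def indepNum (G : SimpleGraph V) : ℕ :=
  univ.sup (fun s : Finset V => if IsIndepSet G s then s.card else 0)

open scoped Classical in
/-- The degree of `v` inside the subgraph of `G` induced by the node set `s`. -/
noncomputable def degOn (G : SimpleGraph V) (s : Finset V) (v : V) : ℕ :=
  (s.filter (fun u => G.Adj v u)).card

namespace IsSinglePeaked

variable {p : ℝ → ℝ} {Λ : ℝ}

lemma map_one (hp : IsSinglePeaked p Λ) : p 1 = 0 := by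
  simpa [hp.map_zero] using hp.symm 1 ⟨hp.peak_mem.2.le, le_rfl⟩

lemma reflect_mem_Icc (hp : IsSinglePeaked p Λ) {x : ℝ} (hx : x ∈ Set.Icc Λ 1) :
    Λ * (1 - x) / (1 - Λ) ∈ Set.Icc 0 Λ := by
  obtain ⟨hΛ0, hΛ1⟩ := hp.peak_mem
  have h1Λ : 0 < 1 - Λ := by linarith
  refine ⟨div_nonneg (mul_nonneg hΛ0.le (by linarith [hx.2])) h1Λ.le, ?_⟩
  rw [div_le_iff₀ h1Λ]
  nlinarith [hx.1]

/-- `x` lies strictly between `y` and the mirror image `1 - y (1 - Λ) / Λ` of `y` across the peak. -/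
lemma lt_of_map_lt (hp : IsSinglePeaked p Λ) {x y : ℝ} (hy : y ∈ Set.Icc 0 Λ)
    (hx : x ∈ Set.Icc 0 1) (h : p y < p x) : y < x ∧ y * (1 - Λ) < Λ * (1 - x) := by
  obtain ⟨hΛ0, hΛ1⟩ := hp.peak_mem
  rcases le_or_gt x Λ with hxΛ | hΛx
  · have hyx : y < x := (hp.strictMonoOn.lt_iff_lt hy ⟨hx.1, hxΛ⟩).1 h
    exact ⟨hyx, by nlinarith [hy.1]⟩
  · rw [hp.symm x ⟨hΛx.le, hx.2⟩] at h
    have hy_lt := (hp.strictMonoOn.lt_iff_lt hy (hp.reflect_mem_Icc ⟨hΛx.le, hx.2⟩)).1 h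
    rw [lt_div_iff₀ (by linarith)] at hy_lt
    exact ⟨by linarith [hy.2], hy_lt⟩

lemma lt_or_lt_of_map_lt (hp : IsSinglePeaked p Λ) {x y : ℝ} (hy : y ∈ Set.Icc 0 Λ)
    (hx : x ∈ Set.Icc 0 1) (h : p x < p y) : x < y ∨ Λ * (1 - x) < y * (1 - Λ) := by
  obtain ⟨hΛ0, hΛ1⟩ := hp.peak_mem
  rcases le_or_gt x Λ with hxΛ | hΛx
  · exact .inl ((hp.strictMonoOn.lt_iff_lt ⟨hx.1, hxΛ⟩ hy).1 h)
  · rw [hp.symm x ⟨hΛx.le, hx.2⟩] at h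
    have hlt_y := (hp.strictMonoOn.lt_iff_lt (hp.reflect_mem_Icc ⟨hΛx.le, hx.2⟩) hy).1 h
    rw [div_lt_iff₀ (by linarith)] at hlt_y
    exact .inr hlt_y

lemma nonneg (hp : IsSinglePeaked p Λ) {x : ℝ} (hx : x ∈ Set.Icc 0 1) : 0 ≤ p x := by
  by_contra! h
  rw [← hp.map_zero] at h
  rcases hp.lt_or_lt_of_map_lt ⟨le_rfl, hp.peak_mem.1.le⟩ hx h with h | h
  · linarith [hx.1]
  · nlinarith [hx.2, hp.peak_mem.1]

lemma map_one_sub_le_of_map_lt (hp : IsSinglePeaked p Λ) (hΛ : Λ ≤ 1 / 2) {a s : ℝ}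
    (ha : a ∈ Set.Icc 0 Λ) (hs : s ∈ Set.Icc 0 1) (h : p a < p s) :
    p (1 - a) ≤ p (1 - s) := by
  obtain ⟨hΛ0, hΛ1⟩ := hp.peak_mem
  have h1Λ : 0 < 1 - Λ := by linarith
  obtain ⟨has, hsa⟩ := hp.lt_of_map_lt ha hs h
  have h1a : 1 - a ∈ Set.Icc Λ 1 := ⟨by linarith [ha.2], by linarith [ha.1]⟩
  rw [hp.symm _ h1a]
  by_contra! h'
  have hrefl : Λ * (1 - (1 - a)) / (1 - Λ) * (1 - Λ) = Λ * a := by field_simp; ring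
  rcases hp.lt_or_lt_of_map_lt (hp.reflect_mem_Icc h1a) ⟨by linarith [hs.2], by linarith [hs.1]⟩
    h' with h | h
  · rw [lt_div_iff₀ h1Λ] at h
    nlinarith [ha.1]
  · rw [hrefl] at h
    nlinarith

end IsSinglePeaked

section Swaps

variable {G : SimpleGraph V} {c : V → Bool} {v w : V}

lemma mem_closedNbhd {u : V} : u ∈ closedNbhd G v ↔ u = v ∨ G.Adj v u := by
  simp [closedNbhd]

lemma card_closedNbhd (G : SimpleGraph V) (v : V) : #(closedNbhd G v) = deg G v + 1 := by
  classical
  have h : closedNbhd G v = insert v (univ.filter (G.Adj v)) := by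
    ext u
    simp [mem_closedNbhd]
  rw [h, card_insert_of_notMem (by simp), deg]

lemma frac_mem_Icc (G : SimpleGraph V) (c : V → Bool) (v : V) : frac G c v ∈ Set.Icc 0 1 := by
  refine ⟨by unfold frac; positivity, div_le_one_of_le₀ ?_ (by positivity)⟩
  exact_mod_cast card_filter_le _ _

lemma frac_eq_one (h : ∀ u, G.Adj v u → c u = c v) : frac G c v = 1 := by
  have hpos : (0 : ℝ) < #(closedNbhd G v) := by rw [card_closedNbhd]; positivity
  rw [frac, filter_true_of_mem, div_self hpos.ne']
  intro u hu
  rcases mem_closedNbhd.1 hu with rfl | hvu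
  exacts [rfl, h u hvu]

lemma frac_eq_one_div_deg_add_one (h : ∀ u, G.Adj v u → c u ≠ c v) :
    frac G c v = 1 / (deg G v + 1) := by
  have hsingle : (closedNbhd G v).filter (fun u => c u = c v) = {v} := by
    ext u
    simp only [mem_filter, mem_closedNbhd, mem_singleton]
    constructor
    · rintro ⟨rfl | hvu, hu⟩
      exacts [rfl, absurd hu (h u hvu)]
    · rintro rfl
      exact ⟨.inl rfl, rfl⟩
  rw [frac, hsingle, card_closedNbhd]
  simp

/-- After an adjacent swap the agent now on `w` sees the closed neighbourhood of `w` with the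
colours of `v` and `w` exchanged, so its same-colour count is the other-colour count of `w`. -/
lemma frac_swapColor_add_frac (hadj : G.Adj v w) (hne : c v ≠ c w) :
    frac G (swapColor c v w) w + frac G c w = 1 := by
  set N := closedNbhd G w
  have hN : N.map (Equiv.swap v w).toEmbedding = N := by
    refine map_perm fun u hu => ?_
    rcases Equiv.eq_or_eq_of_swap_apply_ne_self hu with rfl | rfl
    exacts [mem_closedNbhd.2 (.inr hadj.symm), mem_closedNbhd.2 (.inl rfl)]
  have hswap : #(N.filter fun u => swapColor c v w u = swapColor c v w w)
      = #(N.filter fun u => ¬ c u = c w) := by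
    refine card_equiv (Equiv.swap v w) fun u => ?_
    have hmem : u ∈ N ↔ Equiv.swap v w u ∈ N := by
      conv_lhs => rw [← hN]
      rw [mem_map_equiv, Equiv.symm_swap]
    simp only [mem_filter, swapColor, Function.comp_apply, Equiv.swap_apply_right, hmem,
      ← Bool.eq_not_iff, Bool.eq_not_iff.2 hne]
  have hcount := card_filter_add_card_filter_not (s := N) (fun u => c u = c w)
  have hpos : (0 : ℝ) < #N := by rw [card_closedNbhd]; positivity
  rw [frac, frac, ← add_div, div_eq_one_iff_eq hpos.ne', hswap, add_comm]
  exact_mod_cast hcount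

lemma ProfitableSwap.symm {p : ℝ → ℝ} (h : ProfitableSwap G p c v w) :
    ProfitableSwap G p c w v := by
  obtain ⟨hne, hgain_v, hgain_w⟩ := h
  rw [ProfitableSwap, swapColor, Equiv.swap_comm]
  exact ⟨hne.symm, hgain_w, hgain_v⟩

theorem not_profitableSwap_of_forall_adj_ne {p : ℝ → ℝ} {Λ : ℝ} (hp : IsSinglePeaked p Λ)
    (hΛ : Λ ≤ 1 / 2) (hv : ∀ u, G.Adj v u → c u ≠ c v) (hfv : frac G c v ≤ Λ) :
    ¬ ProfitableSwap G p c v w := by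
  rintro ⟨hne, hgain_v, hgain_w⟩
  by_cases hadj : G.Adj v w
  · have hfw : frac G c w = 1 - frac G (swapColor c v w) w := by
      linarith [frac_swapColor_add_frac hadj hne]
    have hfv' : frac G (swapColor c v w) v = 1 - frac G c v := by
      rw [show swapColor c v w = swapColor c w v by rw [swapColor, swapColor, Equiv.swap_comm]]
      linarith [frac_swapColor_add_frac hadj.symm hne.symm]
    rw [hfw, hfv'] at hgain_w
    exact (hp.map_one_sub_le_of_map_lt hΛ ⟨(frac_mem_Icc G c v).1, hfv⟩
      (frac_mem_Icc _ _ _) hgain_v).not_gt hgain_w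
  · have hsegregated : frac G (swapColor c v w) v = 1 := by
      refine frac_eq_one fun u hvu => ?_
      have huv : u ≠ v := (G.ne_of_adj hvu).symm
      have huw : u ≠ w := by rintro rfl; exact hadj hvu
      simp only [swapColor, Function.comp_apply, Equiv.swap_apply_left,
        Equiv.swap_apply_of_ne_of_ne huv huw]
      exact (Bool.eq_not_iff.2 (hv u hvu)).trans (Bool.eq_not_iff.2 hne.symm).symm
    rw [hsegregated, hp.map_one] at hgain_w
    exact (hp.nonneg (frac_mem_Icc G c w)).not_gt hgain_w

end Swaps

theorem independent_set_profile_is_swap_equilibrium_general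
    {V : Type*} [Fintype V] [DecidableEq V] (G : SimpleGraph V) (b : ℕ) (Λ : ℝ) (p : ℝ → ℝ)
    (hgame : IsGame G b Λ p)
    (hΛ₁ : 1 / ((minDeg G : ℝ) + 1) ≤ Λ) (hΛ₂ : Λ ≤ 1 / 2)
    (c : V → Bool) (k : Bool)
    (hind : IsIndepSet G (Finset.univ.filter (fun v => c v = k))) :
    IsSwapEquilibrium G p c := by
  have hstable : ∀ v w, c v = k → ¬ ProfitableSwap G p c v w := by
    intro v w hv
    have hnbr : ∀ u, G.Adj v u → c u ≠ c v := fun u hvu hu =>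
      hind v (by simpa using hv) u (by simpa [hv] using hu) hvu
    refine not_profitableSwap_of_forall_adj_ne hgame.singlePeaked hΛ₂ hnbr ?_
    calc frac G c v = 1 / ((deg G v : ℝ) + 1) := frac_eq_one_div_deg_add_one hnbr
      _ ≤ 1 / ((minDeg G : ℝ) + 1) := by
        gcongr
        exact Nat.sInf_le ⟨v, rfl⟩
      _ ≤ Λ := hΛ₁
  intro v w hswap
  by_cases hv : c v = k
  · exact hstable v w hv hswap
  · have hw : c w = k := by
      rw [Bool.eq_not_iff.2 hswap.1.symm, Bool.eq_not_iff.2 hv, Bool.not_not]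
    exact hstable w v hw hswap.symm

/-- For a game `(G,b,Λ)` with `1/(δ(G)+1) ≤ Λ ≤ 1/2`, any strategy profile
in which all agents of one color occupy an independent set of `G` is a swap equilibrium. -/
theorem independent_set_profile_is_swap_equilibrium
    {V : Type*} [Fintype V] [DecidableEq V] (G : SimpleGraph V) (b : ℕ) (Λ : ℝ) (p : ℝ → ℝ)
    (hgame : IsGame G b Λ p)
    (hΛ₁ : 1 / ((minDeg G : ℝ) + 1) ≤ Λ) (hΛ₂ : Λ ≤ 1 / 2)
    (c : V → Bool) (hc : IsProfile c b) (k : Bool)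
    (hind : IsIndepSet G (Finset.univ.filter (fun v => c v = k))) :
    IsSwapEquilibrium G p c :=
  independent_set_profile_is_swap_equilibrium_general G b Λ p hgame hΛ₁ hΛ₂ c k hind

end SwapSchelling
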